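/- Let A, B, R be three points of the Euclidean plane ℝ² such that R does not lie on the line through A and B. Then the Lebesgue measure of the set of angles θ ∈ [0, 2π) for which the ray from R in direction (cos θ, sin θ) intersects the closed segment from A to B — that is, the set {θ ∈ [0, 2π) : ∃ t ≥ 0, ∃ s ∈ [0,1], R + t·(cos θ, sin θ) = A + s·(B − A)} — equals the (undirected) angle ∠ARB at the vertex R of the triangle ARB. -/

import Mathlib

/-!
Write `A - R = r • dirVec α` and `B - R = ρ • dirVec β` in polar form. Since
`cos ∠ARB = cos (β - α)`, after possibly exchanging `A` and `B` we may take `β = α + γ` with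
`γ = ∠ARB ∈ (0, π)`. The identity
`sin γ • dirVec θ = sin (α + γ - θ) • dirVec α + sin (θ - α) • dirVec (α + γ)`
shows that the ray in direction `θ` meets the segment exactly when both sines are nonnegative,
i.e. when `θ - α ∈ [0, γ]` modulo `2π`. As this condition is `2π`-periodic, its measure on
`[0, 2π)` equals its measure on `[α, α + 2π)`, where it is the interval `[α, α + γ]`.
-/

open Real Set EuclideanGeometry

/-- The direction vector of angle `θ` in the Euclidean plane. -/
noncomputable def dirVec (θ : ℝ) : EuclideanSpace ℝ (Fin 2) :=
  (WithLp.equiv 2 (Fin 2 → ℝ)).symm ![Real.cos θ, Real.sin θ]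

open MeasureTheory

theorem Function.Periodic.volume_Ico_inter_setOf_eq {p : ℝ → Prop} {T : ℝ}
    (hp : Function.Periodic p T) (hT : 0 < T) (hmeas : MeasurableSet {x | p x}) (t u : ℝ) :
    volume (Ico t (t + T) ∩ {x | p x}) = volume (Ico u (u + T) ∩ {x | p x}) := by
  have : Fact (0 < T) := ⟨hT⟩
  have hcircle : ∀ t,
      volume (Ico t (t + T) ∩ {x | p x}) = volume {ψ : AddCircle T | hp.lift ψ} := by
    intro t
    rw [inter_comm, AddCircle.add_projection_respects_measure T t hmeas]
    exact measure_congr ((ae_eq_refl _).inter Ico_ae_eq_Ioc)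
  rw [hcircle, hcircle]

section Segment

variable {V : Type*} [AddCommGroup V] [Module ℝ V]

theorem exists_add_eq_add_smul_sub_iff_mem_segment (A B R v : V) :
    (∃ s ∈ Icc (0 : ℝ) 1, R + v = A + s • (B - A)) ↔ v ∈ segment ℝ (A - R) (B - R) := by
  simp only [segment_eq_image', sub_sub_sub_cancel_right, mem_image]
  refine exists_congr fun s => and_congr_right fun _ => ?_
  rw [sub_add_eq_add_sub, sub_eq_iff_eq_add', eq_comm]

theorem exists_nonneg_smul_mem_segment_iff {a b u : V} (hab : LinearIndependent ℝ ![a, b])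
    {c₁ c₂ : ℝ} (hu : u = c₁ • a + c₂ • b) (hu₀ : u ≠ 0) :
    (∃ t : ℝ, 0 ≤ t ∧ t • u ∈ segment ℝ a b) ↔ 0 ≤ c₁ ∧ 0 ≤ c₂ := by
  constructor
  · rintro ⟨t, ht, p, q, hp, hq, hpq, htu⟩
    have hcoord : t * c₁ - p = 0 ∧ t * c₂ - q = 0 := by
      refine LinearIndependent.pair_iff.1 hab _ _ ?_
      linear_combination (norm := module) -(t • hu) - htu
    have ht₀ : 0 < t := by
      refine ht.lt_of_ne fun ht₀ => ?_
      subst ht₀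
      linarith [hcoord.1, hcoord.2]
    exact ⟨(mul_nonneg_iff_of_pos_left ht₀).1 (by linarith [hcoord.1]),
      (mul_nonneg_iff_of_pos_left ht₀).1 (by linarith [hcoord.2])⟩
  · rintro ⟨h₁, h₂⟩
    have hc : 0 < c₁ + c₂ := by
      refine (add_nonneg h₁ h₂).lt_of_ne fun hc => hu₀ ?_
      rw [hu, (by linarith : c₁ = 0), (by linarith : c₂ = 0)]
      simp
    refine ⟨(c₁ + c₂)⁻¹, by positivity, c₁ / (c₁ + c₂), c₂ / (c₁ + c₂), by positivity,
      by positivity, by field_simp, ?_⟩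
    rw [hu, smul_add, smul_smul, smul_smul, div_eq_inv_mul, div_eq_inv_mul]

end Segment

@[simp] lemma dirVec_apply_zero (θ : ℝ) : dirVec θ 0 = cos θ := rfl

@[simp] lemma dirVec_apply_one (θ : ℝ) : dirVec θ 1 = sin θ := rfl

lemma norm_dirVec (θ : ℝ) : ‖dirVec θ‖ = 1 := by
  simp [EuclideanSpace.norm_eq, Fin.sum_univ_two]

lemma dirVec_ne_zero (θ : ℝ) : dirVec θ ≠ 0 :=
  norm_ne_zero_iff.1 (by simp [norm_dirVec])

lemma dirVec_add_int_mul_two_pi (θ : ℝ) (k : ℤ) : dirVec (θ + k * (2 * π)) = dirVec θ := by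
  ext i; fin_cases i <;> simp [cos_add_int_mul_two_pi, sin_add_int_mul_two_pi]

lemma exists_pos_smul_dirVec {v : EuclideanSpace ℝ (Fin 2)} (hv : v ≠ 0) :
    ∃ r : ℝ, 0 < r ∧ ∃ α, v = r • dirVec α := by
  obtain ⟨z, rfl⟩ := Complex.orthonormalBasisOneI.repr.surjective v
  refine ⟨‖z‖, by simpa using hv, z.arg, ?_⟩
  ext i; fin_cases i
  · simp [Complex.norm_mul_cos_arg]
  · simp [Complex.norm_mul_sin_arg]

lemma cos_angle_smul_dirVec {r ρ : ℝ} (hr : 0 < r) (hρ : 0 < ρ) (α β : ℝ) :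
    cos (InnerProductGeometry.angle (r • dirVec α) (ρ • dirVec β)) = cos (β - α) := by
  rw [InnerProductGeometry.angle_smul_left_of_pos _ _ hr,
    InnerProductGeometry.angle_smul_right_of_pos _ _ hρ, InnerProductGeometry.cos_angle]
  simp [norm_dirVec, PiLp.inner_apply, Fin.sum_univ_two, cos_sub]

lemma sin_smul_dirVec (α γ θ : ℝ) :
    sin γ • dirVec θ = sin (α + γ - θ) • dirVec α + sin (θ - α) • dirVec (α + γ) := by
  have h := sin_sq_add_cos_sq α
  ext i
  fin_cases i <;> simp only [Fin.zero_eta, Fin.mk_one, Fin.isValue, PiLp.add_apply,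
    PiLp.smul_apply, smul_eq_mul, dirVec_apply_zero, dirVec_apply_one, sin_sub, sin_add, cos_add]
  · linear_combination (-(cos θ * sin γ)) * h
  · linear_combination (-(sin θ * sin γ)) * h

lemma linearIndependent_smul_dirVec {r ρ α γ : ℝ} (hr : r ≠ 0) (hρ : ρ ≠ 0) (hγ : sin γ ≠ 0) :
    LinearIndependent ℝ ![r • dirVec α, ρ • dirVec (α + γ)] := by
  refine LinearIndependent.pair_iff.2 fun s t hst => ?_
  have h₀ := congrArg (· 0) hst
  have h₁ := congrArg (· 1) hst
  simp only [PiLp.add_apply, PiLp.smul_apply, dirVec_apply_zero, dirVec_apply_one, smul_eq_mul,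
    PiLp.zero_apply] at h₀ h₁
  have hsin : sin γ = sin (α + γ) * cos α - cos (α + γ) * sin α := by
    rw [← sin_sub, add_sub_cancel_left]
  have hs : s * r * sin γ = 0 := by
    linear_combination sin (α + γ) * h₀ - cos (α + γ) * h₁ + s * r * hsin
  have ht : t * ρ * sin γ = 0 := by
    linear_combination cos α * h₁ - sin α * h₀ + t * ρ * hsin
  simp_all

lemma exists_nonneg_smul_dirVec_mem_segment_iff {r ρ α γ : ℝ} (hr : 0 < r) (hρ : 0 < ρ)
    (hγ : 0 < sin γ) (θ : ℝ) :
    (∃ t : ℝ, 0 ≤ t ∧ t • dirVec θ ∈ segment ℝ (r • dirVec α) (ρ • dirVec (α + γ))) ↔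
      0 ≤ sin (θ - α) ∧ 0 ≤ sin (α + γ - θ) := by
  have hθ : dirVec θ = ((r * sin γ)⁻¹ * sin (α + γ - θ)) • r • dirVec α
      + ((ρ * sin γ)⁻¹ * sin (θ - α)) • ρ • dirVec (α + γ) := by
    refine smul_right_injective _ hγ.ne' ?_
    simp only [sin_smul_dirVec α γ θ, smul_add, smul_smul]
    congr 2 <;> field_simp
  rw [exists_nonneg_smul_mem_segment_iff (linearIndependent_smul_dirVec hr.ne' hρ.ne' hγ.ne')
    hθ (dirVec_ne_zero θ), and_comm,
    mul_nonneg_iff_of_pos_left (by positivity), mul_nonneg_iff_of_pos_left (by positivity)]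

lemma sin_nonneg_and_sin_sub_nonneg_iff {γ x : ℝ} (hγ : 0 < γ) (hγπ : γ ≤ π)
    (hx : x ∈ Ico 0 (2 * π)) : 0 ≤ sin x ∧ 0 ≤ sin (γ - x) ↔ x ≤ γ := by
  obtain ⟨hx₀, hx₂π⟩ := hx
  refine ⟨fun ⟨hsin, hsin'⟩ => ?_, fun hxγ =>
    ⟨sin_nonneg_of_nonneg_of_le_pi hx₀ (hxγ.trans hγπ),
      sin_nonneg_of_nonneg_of_le_pi (by linarith) (by linarith)⟩⟩
  by_contra! hγx
  rcases le_or_gt x π with hxπ | hπx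
  · exact (sin_neg_of_neg_of_neg_pi_lt (by linarith) (by linarith)).not_ge hsin'
  · have hsin_sub := sin_pos_of_pos_of_lt_pi (x := x - π) (by linarith) (by linarith)
    rw [sin_sub_pi] at hsin_sub
    linarith

lemma volume_Ico_inter_setOf_sin_nonneg {γ : ℝ} (hγ : 0 < γ) (hγπ : γ ≤ π) (α : ℝ) :
    volume (Ico 0 (2 * π) ∩ {θ | 0 ≤ sin (θ - α) ∧ 0 ≤ sin (α + γ - θ)}) =
      ENNReal.ofReal γ := by
  have hper : Function.Periodic (fun θ => 0 ≤ sin (θ - α) ∧ 0 ≤ sin (α + γ - θ)) (2 * π) :=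
    fun θ => by
      simp only [add_sub_right_comm θ, sin_add_two_pi, sub_add_eq_sub_sub, sin_sub_two_pi]
  have hmeas : MeasurableSet {θ | 0 ≤ sin (θ - α) ∧ 0 ≤ sin (α + γ - θ)} :=
    (measurableSet_le measurable_const (by fun_prop : Measurable fun θ => sin (θ - α))).inter
      (measurableSet_le measurable_const (by fun_prop : Measurable fun θ => sin (α + γ - θ)))
  have hIcc :
      Ico α (α + 2 * π) ∩ {θ | 0 ≤ sin (θ - α) ∧ 0 ≤ sin (α + γ - θ)} = Icc α (α + γ) := by
    ext θ
    have hθ : θ ∈ Ico α (α + 2 * π) ↔ θ - α ∈ Ico 0 (2 * π) := by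
      simp only [mem_Ico, sub_nonneg, sub_lt_iff_lt_add']
    rw [mem_inter_iff, hθ, mem_ofPred_eq, show α + γ - θ = γ - (θ - α) by ring]
    constructor
    · rintro ⟨hθα, hsin⟩
      have hθγ := (sin_nonneg_and_sin_sub_nonneg_iff hγ hγπ hθα).1 hsin
      exact ⟨by linarith [hθα.1], by linarith⟩
    · rintro ⟨hαθ, hθγ⟩
      have hθα : θ - α ∈ Ico 0 (2 * π) := ⟨by linarith, by linarith [pi_pos]⟩
      exact ⟨hθα, (sin_nonneg_and_sin_sub_nonneg_iff hγ hγπ hθα).2 (by linarith)⟩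
  rw [← zero_add (2 * π), hper.volume_Ico_inter_setOf_eq two_pi_pos hmeas 0 α, hIcc,
    Real.volume_Icc, add_sub_cancel_left]

lemma volume_Ico_inter_setOf_nonneg_smul_dirVec_mem_segment {r ρ γ : ℝ} (hr : 0 < r)
    (hρ : 0 < ρ) (hγ : 0 < γ) (hγπ : γ < π) (α : ℝ) :
    volume (Ico 0 (2 * π) ∩
        {θ | ∃ t : ℝ, 0 ≤ t ∧ t • dirVec θ ∈ segment ℝ (r • dirVec α) (ρ • dirVec (α + γ))}) =
      ENNReal.ofReal γ := by
  simp only [exists_nonneg_smul_dirVec_mem_segment_iff hr hρ (sin_pos_of_pos_of_lt_pi hγ hγπ)]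
  exact volume_Ico_inter_setOf_sin_nonneg hγ hγπ.le α

/-- If `R` does not lie on the line through `A` and `B`, the Lebesgue measure of the
set of angles `θ ∈ [0, 2π)` for which the ray from `R` in direction `(cos θ, sin θ)`
meets the closed segment `[A, B]` equals the undirected angle `∠ A R B`. -/
theorem stmt_2 (A B R : EuclideanSpace ℝ (Fin 2))
    (h : ¬ Collinear ℝ ({A, B, R} : Set (EuclideanSpace ℝ (Fin 2)))) :
    MeasureTheory.volume
      {θ : ℝ | θ ∈ Set.Ico 0 (2 * π) ∧
        ∃ t : ℝ, 0 ≤ t ∧ ∃ s ∈ Set.Icc (0 : ℝ) 1,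
          R + t • dirVec θ = A + s • (B - A)}
      = ENNReal.ofReal (∠ A R B) := by
  simp only [exists_add_eq_add_smul_sub_iff_mem_segment]
  obtain ⟨r, hr, α, hA⟩ :=
    exists_pos_smul_dirVec (sub_ne_zero.2 (ne₁₃_of_not_collinear h))
  obtain ⟨ρ, hρ, β, hB⟩ :=
    exists_pos_smul_dirVec (sub_ne_zero.2 (ne₂₃_of_not_collinear h))
  have h' : ¬Collinear ℝ ({A, R, B} : Set (EuclideanSpace ℝ (Fin 2))) := by rwa [pair_comm]
  have hγ := angle_pos_of_not_collinear h'
  have hγπ := angle_lt_pi_of_not_collinear h'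
  have hcos : cos (∠ A R B) = cos (β - α) := by
    rw [EuclideanGeometry.angle, vsub_eq_sub, vsub_eq_sub, hA, hB, cos_angle_smul_dirVec hr hρ]
  obtain ⟨k, hk | hk⟩ := cos_eq_cos_iff.1 hcos
  · rw [hA, hB, show β = α + ∠ A R B + k * (2 * π) by linarith, dirVec_add_int_mul_two_pi]
    exact volume_Ico_inter_setOf_nonneg_smul_dirVec_mem_segment hr hρ hγ hγπ α
  · rw [segment_symm, hA, hB,
      show α = β + ∠ A R B + (-k : ℤ) * (2 * π) by push_cast; linarith, dirVec_add_int_mul_two_pi]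
    exact volume_Ico_inter_setOf_nonneg_smul_dirVec_mem_segment hρ hr hγ hγπ β
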